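/- Assume moreover that U+G < T. Then both value functions s ↦ V_mu(s) and s ↦ V_un(s) are strictly increasing and continuous on [0,P]. -/

import Mathlib

open Finset

noncomputable section

/-- Effective estimation quality `ξ_{jk} = τ q_{jk}^{up} η_{jk}² / (1 + Σ_t τ q_{jt}^{up} η_{jt})`. -/
def xiX {G : ℕ} {K : Fin G → ℕ} (η : ∀ j : Fin G, Fin (K j) → ℝ)
    (τ : ℕ) (qup : ∀ j : Fin G, Fin (K j) → ℝ) (j : Fin G) (k : Fin (K j)) : ℝ :=
  (τ : ℝ) * qup j k * (η j k) ^ 2 / (1 + ∑ t, (τ : ℝ) * qup j t * η j t)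

/-- Effective estimation quality `θ_m = τ p_m^{up} β_m² / (1 + τ p_m^{up} β_m)`. -/
def thetaX {U : ℕ} (β : Fin U → ℝ) (τ : ℕ) (pup : Fin U → ℝ) (m : Fin U) : ℝ :=
  (τ : ℝ) * pup m * (β m) ^ 2 / (1 + (τ : ℝ) * pup m * β m)

/-- The multicast objective
`O_mu(x) = (1-τ/T) log₂(1 + min_{j,k} N q_j^{dl} ξ_{jk} / (1 + η_{jk}(P_un+P_mu)))`. -/
def OmuX {U G : ℕ} {K : Fin G → ℕ} (N T : ℕ) (η : ∀ j : Fin G, Fin (K j) → ℝ)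
    (τ : ℕ) (qup : ∀ j : Fin G, Fin (K j) → ℝ) (qdl : Fin G → ℝ) (pdl : Fin U → ℝ) : ℝ :=
  (1 - (τ : ℝ) / (T : ℝ)) * Real.logb 2 (1 + ⨅ j : Fin G, ⨅ k : Fin (K j),
    (N : ℝ) * qdl j * xiX η τ qup j k / (1 + η j k * (∑ m, pdl m + ∑ i, qdl i)))

/-- The unicast objective
`O_un(x) = (1-τ/T) Σ_m α_m log₂(1 + N p_m^{dl} θ_m / (1 + β_m (P_un+P_mu)))`. -/
def OunX {U G : ℕ} (N T : ℕ) (β α : Fin U → ℝ)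
    (τ : ℕ) (pup pdl : Fin U → ℝ) (qdl : Fin G → ℝ) : ℝ :=
  (1 - (τ : ℝ) / (T : ℝ)) * ∑ m, α m * Real.logb 2 (1 +
    (N : ℝ) * pdl m * thetaX β τ pup m / (1 + β m * (∑ u, pdl u + ∑ j, qdl j)))

/-- The feasible set (resource bundle) `X` of the multiobjective problem. -/
def feasX {U G : ℕ} {K : Fin G → ℕ} (T : ℕ) (P : ℝ)
    (Emu : ∀ j : Fin G, Fin (K j) → ℝ) (Eun : Fin U → ℝ) (τ : ℕ)
    (qup : ∀ j : Fin G, Fin (K j) → ℝ) (qdl : Fin G → ℝ) (pup pdl : Fin U → ℝ) : Prop :=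
  U + G ≤ τ ∧ τ ≤ T ∧
    (∀ j, 0 ≤ qdl j) ∧ (∀ m, 0 ≤ pdl m) ∧
    (∀ j k, 0 ≤ qup j k ∧ (τ : ℝ) * qup j k ≤ Emu j k) ∧
    (∀ m, 0 ≤ pup m ∧ (τ : ℝ) * pup m ≤ Eun m) ∧
    ∑ m, pdl m + ∑ j, qdl j ≤ P

/-- The attainable objective set `S = {(O_mu(x), O_un(x)) : x ∈ X} ⊆ ℝ²`. -/
def attainS {U G : ℕ} {K : Fin G → ℕ} (N T : ℕ) (P : ℝ)
    (η Emu : ∀ j : Fin G, Fin (K j) → ℝ) (β Eun α : Fin U → ℝ) : Set (ℝ × ℝ) :=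
  {y | ∃ (τ : ℕ) (qup : ∀ j : Fin G, Fin (K j) → ℝ) (qdl : Fin G → ℝ)
      (pup pdl : Fin U → ℝ),
    feasX T P Emu Eun τ qup qdl pup pdl ∧
    y = (OmuX N T η τ qup qdl pdl, OunX N T β α τ pup pdl qdl)}

/-- The multicast value function `V_mu(s)`: the best multicast objective when the
multicast downlink power is at most `s` and the unicast downlink power equals `P - s`. -/
def VmuX {U G : ℕ} {K : Fin G → ℕ} (N T : ℕ) (P : ℝ)
    (η Emu : ∀ j : Fin G, Fin (K j) → ℝ) (β Eun α : Fin U → ℝ) (s : ℝ) : ℝ :=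
  sSup {v : ℝ | ∃ (τ : ℕ) (qup : ∀ j : Fin G, Fin (K j) → ℝ) (qdl : Fin G → ℝ)
      (pup pdl : Fin U → ℝ),
    feasX T P Emu Eun τ qup qdl pup pdl ∧
    (∑ j, qdl j ≤ s) ∧ (∑ m, pdl m = P - s) ∧
    v = OmuX N T η τ qup qdl pdl}

/-- The unicast value function `V_un(s)`: the best unicast objective when the unicast
downlink power is at most `s` and the multicast downlink power equals `P - s`. -/
def VunX {U G : ℕ} {K : Fin G → ℕ} (N T : ℕ) (P : ℝ)
    (η Emu : ∀ j : Fin G, Fin (K j) → ℝ) (β Eun α : Fin U → ℝ) (s : ℝ) : ℝ :=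
  sSup {v : ℝ | ∃ (τ : ℕ) (qup : ∀ j : Fin G, Fin (K j) → ℝ) (qdl : Fin G → ℝ)
      (pup pdl : Fin U → ℝ),
    feasX T P Emu Eun τ qup qdl pup pdl ∧
    (∑ m, pdl m ≤ s) ∧ (∑ j, qdl j = P - s) ∧
    v = OunX N T β α τ pup pdl qdl}

/-!
Both value functions are suprema of objective values over allocations, and each objective sees
the downlink powers only through its own service's powers and the total power. Scaling the own
powers of an allocation by `ρ` and handing the rest of the budget to the other service multiplies
the numerators of the relevant SINRs by `ρ`, and moving the budget from `s` to `s'` this way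
raises the total power by at most `max 0 (s - s')`.

Going up from `a` to `b` therefore multiplies these SINRs by at least `b / a`. A positive value
has pre-log factor `1 - τ / T ≥ 1 / T`, so every value above a fixed positive level gains a fixed
amount; together with `V 0 ≤ 0 < V s` for `s > 0` (take `τ = T - 1`) this gives strict
monotonicity. Going down from `b` to `a` costs at most `O((b - a) / a)`, a local Lipschitz bound
away from `0`; at `0`, continuity follows from `V s ≤ 2 N C s`.
-/

open Filter Topology

section Logarithms

open Real

lemma logb_one_add_le_two_mul {x : ℝ} (hx : 0 ≤ x) : logb 2 (1 + x) ≤ 2 * x := by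
  have hlog : log (1 + x) ≤ x := by
    linarith [log_le_sub_one_of_pos (by linarith : (0 : ℝ) < 1 + x)]
  rw [logb, div_le_iff₀ (log_pos one_lt_two)]
  nlinarith [log_two_gt_d9]

lemma logb_one_add_le_of_le_mul {x y θ : ℝ} (hx : 0 ≤ x) (hy : 0 ≤ y) (hθ : 1 ≤ θ)
    (h : x ≤ θ * y) : logb 2 (1 + x) ≤ logb 2 (1 + y) + 2 * (θ - 1) := by
  calc logb 2 (1 + x) ≤ logb 2 ((1 + (θ - 1)) * (1 + y)) :=
        logb_le_logb_of_le one_lt_two (by linarith) (by nlinarith)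
    _ = logb 2 (1 + (θ - 1)) + logb 2 (1 + y) :=
        logb_mul (by linarith) (by linarith)
    _ ≤ logb 2 (1 + y) + 2 * (θ - 1) := by
        linarith [logb_one_add_le_two_mul (by linarith : 0 ≤ θ - 1)]

def logGain (ρ m : ℝ) : ℝ := logb 2 (1 + ρ * m) - logb 2 (1 + m)

lemma logGain_pos {ρ m : ℝ} (hρ : 1 < ρ) (hm : 0 < m) : 0 < logGain ρ m :=
  sub_pos.2 (logb_lt_logb one_lt_two (by linarith) (by nlinarith))

lemma monotoneOn_logGain {ρ : ℝ} (hρ : 1 ≤ ρ) : MonotoneOn (logGain ρ) (Set.Ici 0) := by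
  intro m₀ (hm₀ : 0 ≤ m₀) m (hm : 0 ≤ m) h
  have key : (1 + ρ * m₀) * (1 + m) ≤ (1 + ρ * m) * (1 + m₀) := by nlinarith
  have := logb_le_logb_of_le one_lt_two (by positivity) key
  rw [logb_mul (by nlinarith) (by linarith), logb_mul (by nlinarith) (by linarith)] at this
  unfold logGain
  linarith

lemma logGain_nonneg {ρ m : ℝ} (hρ : 1 ≤ ρ) (hm : 0 ≤ m) : 0 ≤ logGain ρ m := by
  simpa [logGain] using monotoneOn_logGain hρ Set.self_mem_Ici hm hm

lemma logb_add_logGain_le {ρ m r : ℝ} (hρ : 1 ≤ ρ) (hm : 0 ≤ m) (hr : 0 < r)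
    (hrm : r ≤ logb 2 (1 + m)) : logb 2 (1 + m) + logGain ρ (r / 2) ≤ logb 2 (1 + ρ * m) := by
  have hr2 : r / 2 ≤ m := by linarith [logb_one_add_le_two_mul hm]
  have := monotoneOn_logGain hρ (show (0 : ℝ) ≤ r / 2 by positivity) hm hr2
  unfold logGain at this ⊢
  linarith

lemma sum_mul_logb_add_logGain_le {ι : Type*} [Fintype ι] [Nonempty ι] {w t : ι → ℝ}
    {w₀ ρ r : ℝ} (hρ : 1 ≤ ρ) (hw₀ : 0 ≤ w₀) (hw : ∀ i, w₀ ≤ w i) (ht : ∀ i, 0 ≤ t i)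
    (hr : 0 < r) (hrt : r ≤ ∑ i, w i * logb 2 (1 + t i)) :
    ∑ i, w i * logb 2 (1 + t i) + w₀ * logGain ρ (r / (2 * ∑ i, w i)) ≤
      ∑ i, w i * logb 2 (1 + ρ * t i) := by
  have hw' : ∀ i, 0 ≤ w i := fun i => hw₀.trans (hw i)
  obtain ⟨i, hi⟩ := Finite.exists_max t
  have hrti : r ≤ (∑ j, w j) * (2 * t i) := by
    calc r ≤ ∑ j, w j * logb 2 (1 + t j) := hrt
      _ ≤ ∑ j, w j * (2 * t i) := sum_le_sum fun j _ => mul_le_mul_of_nonneg_left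
          ((logb_one_add_le_two_mul (ht j)).trans (by linarith [hi j])) (hw' j)
      _ = (∑ j, w j) * (2 * t i) := (sum_mul ..).symm
  have hW : 0 < ∑ j, w j := by
    refine (sum_nonneg fun j _ => hw' j).lt_of_ne fun h => ?_
    rw [← h, zero_mul] at hrti
    linarith
  have hri : r / (2 * ∑ j, w j) ≤ t i := by
    rw [div_le_iff₀ (by positivity)]
    linarith
  have hgain : w₀ * logGain ρ (r / (2 * ∑ j, w j)) ≤ ∑ j, w j * logGain ρ (t j) :=
    calc w₀ * logGain ρ (r / (2 * ∑ j, w j)) ≤ w i * logGain ρ (t i) :=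
          mul_le_mul (hw i) (monotoneOn_logGain hρ (by simp; positivity) (ht i) hri)
            (logGain_nonneg hρ (by positivity)) (hw' i)
      _ ≤ ∑ j, w j * logGain ρ (t j) :=
          single_le_sum (fun j _ => mul_nonneg (hw' j) (logGain_nonneg hρ (ht j))) (mem_univ i)
  have hsplit : ∑ j, w j * logb 2 (1 + ρ * t j) =
      ∑ j, w j * logb 2 (1 + t j) + ∑ j, w j * logGain ρ (t j) := by
    rw [← sum_add_distrib]
    exact sum_congr rfl fun j _ => by unfold logGain; ring
  linarith

end Logarithms

section ValueFunction

lemma continuousWithinAt_of_eventually_abs_sub_le {f : ℝ → ℝ} {s : Set ℝ} {x L : ℝ}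
    (h : ∀ᶠ y in 𝓝[s] x, |f y - f x| ≤ L * |y - x|) : ContinuousWithinAt f s x := by
  rw [ContinuousWithinAt, tendsto_iff_norm_sub_tendsto_zero]
  refine squeeze_zero' (Eventually.of_forall fun y => norm_nonneg _) h ?_
  have : Tendsto (fun y => L * |y - x|) (𝓝 x) (𝓝 (L * |x - x|)) :=
    (continuous_const.mul (continuous_id.sub continuous_const).abs).tendsto x
  simpa using this.mono_left nhdsWithin_le_nhds

lemma continuousOn_Icc_of_monotoneOn_of_le_add {f : ℝ → ℝ} {P B K : ℝ} (hK : 0 ≤ K)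
    (hf : MonotoneOn f (Set.Icc 0 P)) (h0 : ∀ y ∈ Set.Icc 0 P, f y ≤ f 0 + B * y)
    (hlip : ∀ a b, 0 < a → a ≤ b → b ≤ P → f b ≤ f a + K * (b - a) / a) :
    ContinuousOn f (Set.Icc 0 P) := by
  intro x hx
  rcases hx.1.eq_or_lt with rfl | hx0
  · refine continuousWithinAt_of_eventually_abs_sub_le (L := B)
      (eventually_nhdsWithin_of_forall fun y hy => ?_)
    rw [abs_of_nonneg (sub_nonneg.2 (hf hx hy hy.1)), sub_zero, abs_of_nonneg hy.1]
    linarith [h0 y hy]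
  · refine continuousWithinAt_of_eventually_abs_sub_le (L := 2 * K / x) ?_
    filter_upwards [self_mem_nhdsWithin, nhdsWithin_le_nhds (Ioi_mem_nhds (half_lt_self hx0))]
      with y hy (hy' : x / 2 < y)
    rcases le_total y x with hyx | hxy
    · have hy0 : 0 < y := by linarith
      have hdiv : K * (x - y) / y ≤ K * (x - y) / (x / 2) :=
        div_le_div_of_nonneg_left (mul_nonneg hK (by linarith)) (by linarith) hy'.le
      rw [abs_sub_comm, abs_of_nonneg (sub_nonneg.2 (hf hy hx hyx)), abs_sub_comm,
        abs_of_nonneg (sub_nonneg.2 hyx)]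
      have : K * (x - y) / (x / 2) = 2 * K / x * (x - y) := by field_simp
      linarith [hlip y x hy0 hyx hx.2]
    · have : K * (y - x) / x ≤ 2 * K / x * (y - x) := by
        rw [show 2 * K / x * (y - x) = 2 * (K * (y - x) / x) by ring]
        linarith [div_nonneg (mul_nonneg hK (sub_nonneg.2 hxy)) hx0.le]
      rw [abs_of_nonneg (sub_nonneg.2 (hf hx hy hxy)), abs_of_nonneg (sub_nonneg.2 hxy)]
      linarith [hlip x y hx0 hxy hy.2]

variable {S : ℝ → Set ℝ} {P B K : ℝ}

lemma strictMonoOn_sSup (le_mul : ∀ s ∈ Set.Icc 0 P, ∀ v ∈ S s, v ≤ B * s)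
    (exists_pos : ∀ s ∈ Set.Ioc 0 P, ∃ v ∈ S s, 0 < v)
    (gain : ∀ a b, 0 < a → a < b → b ≤ P → ∀ r, 0 < r →
      ∃ δ > 0, ∀ v ∈ S a, r ≤ v → ∃ v' ∈ S b, v + δ ≤ v') :
    StrictMonoOn (fun s => sSup (S s)) (Set.Icc 0 P) := by
  have bdd : ∀ s ∈ Set.Icc 0 P, BddAbove (S s) := fun s hs => ⟨B * s, le_mul s hs⟩
  intro a ha b hb hab
  dsimp only
  rcases ha.1.eq_or_lt with rfl | ha0
  · obtain ⟨w, hw, hw0⟩ := exists_pos b ⟨hab, hb.2⟩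
    have : sSup (S 0) ≤ 0 := Real.sSup_nonpos fun v hv => by simpa using le_mul 0 ha v hv
    linarith [le_csSup (bdd b hb) hw]
  · obtain ⟨u, hu, hu0⟩ := exists_pos a ⟨ha0, ha.2⟩
    set V := sSup (S a)
    have hV : 0 < V := hu0.trans_le (le_csSup (bdd a ha) hu)
    obtain ⟨δ, hδ, hgain⟩ := gain a b ha0 hab hb.2 (V / 2) (half_pos hV)
    obtain ⟨v, hv, hvV⟩ :=
      exists_lt_of_lt_csSup ⟨u, hu⟩ (sub_lt_self V (lt_min (half_pos hV) hδ))
    obtain ⟨v', hv', hvv'⟩ := hgain v hv (by linarith [min_le_left (V / 2) δ])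
    calc V < v + δ := by linarith [min_le_right (V / 2) δ]
      _ ≤ v' := hvv'
      _ ≤ sSup (S b) := le_csSup (bdd b hb) hv'

lemma continuousOn_sSup (hK : 0 ≤ K) (hmono : MonotoneOn (fun s => sSup (S s)) (Set.Icc 0 P))
    (zero_mem : ∀ s ∈ Set.Icc 0 P, (0 : ℝ) ∈ S s)
    (le_mul : ∀ s ∈ Set.Icc 0 P, ∀ v ∈ S s, v ≤ B * s)
    (loss : ∀ a b, 0 < a → a ≤ b → b ≤ P → ∀ v' ∈ S b, ∃ v ∈ S a, v' ≤ v + K * (b - a) / a) :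
    ContinuousOn (fun s => sSup (S s)) (Set.Icc 0 P) := by
  have bdd : ∀ s ∈ Set.Icc 0 P, BddAbove (S s) := fun s hs => ⟨B * s, le_mul s hs⟩
  refine continuousOn_Icc_of_monotoneOn_of_le_add hK hmono (B := B) (fun y hy => ?_)
    fun a b ha hab hbP => ?_
  · have h0 : (0 : ℝ) ∈ Set.Icc 0 P := ⟨le_rfl, hy.1.trans hy.2⟩
    have := le_csSup (bdd 0 h0) (zero_mem 0 h0)
    have := csSup_le ⟨0, zero_mem y hy⟩ (le_mul y hy)
    linarith
  · refine csSup_le ⟨0, zero_mem b ⟨ha.le.trans hab, hbP⟩⟩ fun v' hv' => ?_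
    obtain ⟨v, hv, hle⟩ := loss a b ha hab hbP v' hv'
    linarith [le_csSup (bdd a ⟨ha.le, hab.trans hbP⟩) hv]

lemma strictMonoOn_and_continuousOn_sSup (hK : 0 ≤ K)
    (zero_mem : ∀ s ∈ Set.Icc 0 P, (0 : ℝ) ∈ S s)
    (le_mul : ∀ s ∈ Set.Icc 0 P, ∀ v ∈ S s, v ≤ B * s)
    (exists_pos : ∀ s ∈ Set.Ioc 0 P, ∃ v ∈ S s, 0 < v)
    (gain : ∀ a b, 0 < a → a < b → b ≤ P → ∀ r, 0 < r →
      ∃ δ > 0, ∀ v ∈ S a, r ≤ v → ∃ v' ∈ S b, v + δ ≤ v')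
    (loss : ∀ a b, 0 < a → a ≤ b → b ≤ P → ∀ v' ∈ S b, ∃ v ∈ S a, v' ≤ v + K * (b - a) / a) :
    StrictMonoOn (fun s => sSup (S s)) (Set.Icc 0 P) ∧
      ContinuousOn (fun s => sSup (S s)) (Set.Icc 0 P) :=
  have hmono := strictMonoOn_sSup le_mul exists_pos gain
  ⟨hmono, continuousOn_sSup hK hmono.monotoneOn zero_mem le_mul loss⟩

end ValueFunction

section PreLogFactor

lemma one_sub_div_nonneg_of_le {τ T : ℕ} (h : τ ≤ T) : 0 ≤ 1 - (τ : ℝ) / T :=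
  sub_nonneg.2 (div_le_one_of_le₀ (by exact_mod_cast h) (Nat.cast_nonneg T))

lemma one_sub_div_le_one (τ T : ℕ) : 1 - (τ : ℝ) / T ≤ 1 :=
  sub_le_self _ (by positivity)

lemma inv_le_one_sub_div_of_pos {τ T : ℕ} (h : 0 < 1 - (τ : ℝ) / T) :
    (T : ℝ)⁻¹ ≤ 1 - (τ : ℝ) / T := by
  rcases Nat.eq_zero_or_pos T with rfl | hT
  · simp
  have hT' : (0 : ℝ) < T := by exact_mod_cast hT
  have hτT : τ < T := by
    by_contra! hle
    have : (T : ℝ) ≤ τ := by exact_mod_cast hle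
    linarith [(one_le_div hT').2 this]
  have : (τ : ℝ) + 1 ≤ T := by exact_mod_cast hτT
  rw [inv_eq_one_div, le_sub_iff_add_le, ← add_div, div_le_one hT']
  linarith

/-- Positivity forces `τ < T`, hence a pre-log factor of at least `1 / T`. -/
lemma one_sub_div_mul_add_le {τ T : ℕ} (hτT : τ ≤ T) {L L' g : ℝ}
    (hpos : 0 < (1 - (τ : ℝ) / T) * L) (hg : 0 ≤ g) (h : L + g ≤ L') :
    (1 - (τ : ℝ) / T) * L + (T : ℝ)⁻¹ * g ≤ (1 - (τ : ℝ) / T) * L' := by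
  have hc : 0 < 1 - (τ : ℝ) / T := (one_sub_div_nonneg_of_le hτT).lt_of_ne fun h0 => by
    rw [← h0, zero_mul] at hpos
    exact hpos.false
  nlinarith [inv_le_one_sub_div_of_pos hc]

lemma one_sub_div_mul_le_add {τ T : ℕ} (hτT : τ ≤ T) {L L' E : ℝ} (hE : 0 ≤ E)
    (h : L ≤ L' + E) : (1 - (τ : ℝ) / T) * L ≤ (1 - (τ : ℝ) / T) * L' + E :=
  calc (1 - (τ : ℝ) / T) * L ≤ (1 - (τ : ℝ) / T) * (L' + E) :=
        mul_le_mul_of_nonneg_left h (one_sub_div_nonneg_of_le hτT)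
    _ ≤ (1 - (τ : ℝ) / T) * L' + E := by
        rw [mul_add]
        exact add_le_add le_rfl (mul_le_of_le_one_left hE (one_sub_div_le_one τ T))

end PreLogFactor

lemma sum_const_div_natCast {n : ℕ} (hn : 0 < n) (x : ℝ) : ∑ _i : Fin n, x / n = x := by
  rw [sum_const, card_univ, Fintype.card_fin, nsmul_eq_mul,
    mul_div_cancel₀ _ (Nat.cast_ne_zero.2 hn.ne')]

section SINR

/-- SINR of a user with downlink power `x`, estimation quality `e` and large-scale fading `g`
when the total downlink power is `p`. -/
def sinr (N x e g p : ℝ) : ℝ := N * x * e / (1 + g * p)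

variable {N x e g p : ℝ}

lemma sinr_nonneg (hN : 0 ≤ N) (hx : 0 ≤ x) (he : 0 ≤ e) (hg : 0 ≤ g) (hp : 0 ≤ p) :
    0 ≤ sinr N x e g p :=
  div_nonneg (by positivity) (by positivity)

lemma sinr_pos (hN : 0 < N) (hx : 0 < x) (he : 0 < e) (hg : 0 ≤ g) (hp : 0 ≤ p) :
    0 < sinr N x e g p :=
  div_pos (by positivity) (by positivity)

lemma sinr_le {s : ℝ} (hN : 0 ≤ N) (hx : 0 ≤ x) (hxs : x ≤ s) (he : 0 ≤ e) (heg : e ≤ g)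
    (hp : 0 ≤ p) : sinr N x e g p ≤ N * g * s := by
  have hg : 0 ≤ g := he.trans heg
  calc sinr N x e g p ≤ N * x * e := div_le_self (by positivity) (by nlinarith)
    _ ≤ N * s * g := by have := hx.trans hxs; gcongr
    _ = N * g * s := by ring

lemma mul_sinr_le {p' ρ κ : ℝ} (hρ : 0 ≤ ρ) (hN : 0 ≤ N) (hx : 0 ≤ x) (he : 0 ≤ e)
    (hg : 0 ≤ g) (hp : 0 ≤ p) (hp' : 0 ≤ p') (h : 1 + g * p' ≤ κ * (1 + g * p)) :
    ρ * sinr N x e g p ≤ κ * sinr N (ρ * x) e g p' := by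
  unfold sinr
  rw [mul_div_assoc', mul_div_assoc', div_le_div_iff₀ (by positivity) (by positivity)]
  have : 0 ≤ N * (ρ * x) * e := by positivity
  calc ρ * (N * x * e) * (1 + g * p') = N * (ρ * x) * e * (1 + g * p') := by ring
    _ ≤ N * (ρ * x) * e * (κ * (1 + g * p)) := mul_le_mul_of_nonneg_left h this
    _ = κ * (N * (ρ * x) * e) * (1 + g * p) := by ring

end SINR

section Estimation

variable {U G : ℕ} {K : Fin G → ℕ} {η qup : ∀ j : Fin G, Fin (K j) → ℝ} {τ : ℕ}

lemma one_add_sum_pos (hη : ∀ j k, 0 ≤ η j k) (hq : ∀ j k, 0 ≤ qup j k) (j : Fin G) :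
    0 < 1 + ∑ t, (τ : ℝ) * qup j t * η j t := by
  have : 0 ≤ ∑ t, (τ : ℝ) * qup j t * η j t :=
    sum_nonneg fun t _ => mul_nonneg (mul_nonneg (Nat.cast_nonneg τ) (hq j t)) (hη j t)
  linarith

lemma xiX_nonneg (hη : ∀ j k, 0 ≤ η j k) (hq : ∀ j k, 0 ≤ qup j k) (j : Fin G) (k : Fin (K j)) :
    0 ≤ xiX η τ qup j k :=
  div_nonneg (by have := hq j k; positivity) (one_add_sum_pos hη hq j).le

lemma xiX_le (hη : ∀ j k, 0 ≤ η j k) (hq : ∀ j k, 0 ≤ qup j k) (j : Fin G) (k : Fin (K j)) :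
    xiX η τ qup j k ≤ η j k := by
  have hterm : (τ : ℝ) * qup j k * η j k ≤ ∑ t, (τ : ℝ) * qup j t * η j t :=
    single_le_sum (fun t _ => mul_nonneg (mul_nonneg (Nat.cast_nonneg τ) (hq j t)) (hη j t))
      (mem_univ k)
  rw [xiX, div_le_iff₀ (one_add_sum_pos hη hq j)]
  have := hη j k
  nlinarith

lemma xiX_pos (hη : ∀ j k, 0 < η j k) (hq : ∀ j k, 0 ≤ qup j k) (hτ : 0 < τ)
    {j : Fin G} {k : Fin (K j)} (hqk : 0 < qup j k) : 0 < xiX η τ qup j k :=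
  div_pos (by have := hη j k; positivity) (one_add_sum_pos (fun j k => (hη j k).le) hq j)

variable {β pup : Fin U → ℝ}

lemma thetaX_nonneg (hβ : ∀ m, 0 ≤ β m) (hp : ∀ m, 0 ≤ pup m) (m : Fin U) :
    0 ≤ thetaX β τ pup m := by
  have := hp m; have := hβ m
  exact div_nonneg (by positivity) (by positivity)

lemma thetaX_le (hβ : ∀ m, 0 ≤ β m) (hp : ∀ m, 0 ≤ pup m) (m : Fin U) :
    thetaX β τ pup m ≤ β m := by
  have := hp m; have := hβ m
  have h1 : 0 ≤ (τ : ℝ) * pup m * β m := by positivity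
  rw [thetaX, div_le_iff₀ (by linarith)]
  nlinarith

lemma thetaX_pos (hβ : ∀ m, 0 < β m) (hτ : 0 < τ) {m : Fin U} (hm : 0 < pup m) :
    0 < thetaX β τ pup m := by
  have := hβ m
  exact div_pos (by positivity) (by positivity)

end Estimation

section Infima

variable {ι : Type*} {κ : ι → Type*} [Finite ι] [∀ i, Finite (κ i)]

lemma iInf₂_le_of_finite (f : (i : ι) → κ i → ℝ) (i : ι) (k : κ i) :
    ⨅ i, ⨅ k, f i k ≤ f i k :=
  (ciInf_le (Finite.bddBelow_range _) i).trans (ciInf_le (Finite.bddBelow_range _) k)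

lemma mul_iInf₂_le_mul_iInf₂ {f g : (i : ι) → κ i → ℝ} {a b : ℝ} (ha : 0 ≤ a) (hb : 0 ≤ b)
    (h : ∀ i k, a * f i k ≤ b * g i k) : a * ⨅ i, ⨅ k, f i k ≤ b * ⨅ i, ⨅ k, g i k := by
  simp only [Real.mul_iInf_of_nonneg ha, Real.mul_iInf_of_nonneg hb]
  exact ciInf_mono (Finite.bddBelow_range _) fun i =>
    ciInf_mono (Finite.bddBelow_range _) fun k => h i k

lemma iInf₂_pos_of_finite [Nonempty ι] [∀ i, Nonempty (κ i)] {f : (i : ι) → κ i → ℝ}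
    (h : ∀ i k, 0 < f i k) : 0 < ⨅ i, ⨅ k, f i k := by
  obtain ⟨i, hi⟩ := exists_eq_ciInf_of_finite (f := fun i => ⨅ k, f i k)
  obtain ⟨k, hk⟩ := exists_eq_ciInf_of_finite (f := f i)
  rw [← hi, ← hk]
  exact h i k

end Infima

section Transfer

lemma one_add_mul_le_mul_one_add {g C p p' d : ℝ} (hg : 0 ≤ g) (hgC : g ≤ C) (hp : 0 ≤ p)
    (hd : 0 ≤ d) (h : p' ≤ p + d) : 1 + g * p' ≤ (1 + C * d) * (1 + g * p) := by
  nlinarith [mul_le_mul_of_nonneg_left h hg, mul_le_mul_of_nonneg_right hgC hd,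
    mul_nonneg (mul_nonneg (hg.trans hgC) hd) (mul_nonneg hg hp)]

lemma two_mul_one_add_mul_sub_div_nonneg {a b C P : ℝ} (ha : 0 < a) (hab : a ≤ b)
    (hbP : b ≤ P) (hC : 0 ≤ C) : 0 ≤ 2 * (1 + C * P) * (b - a) / a := by
  have : 0 ≤ C * P := mul_nonneg hC (by linarith)
  have : 0 ≤ b - a := by linarith
  positivity

lemma logb_one_add_le_of_div_mul_le {a b C P x y : ℝ} (ha : 0 < a) (hab : a ≤ b) (hbP : b ≤ P)
    (hC : 0 ≤ C) (hx : 0 ≤ x) (hy : 0 ≤ y) (h : a / b * x ≤ (1 + C * (b - a)) * y) :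
    Real.logb 2 (1 + x) ≤ Real.logb 2 (1 + y) + 2 * (1 + C * P) * (b - a) / a := by
  have hb : 0 < b := ha.trans_le hab
  have hθ : 1 ≤ b / a * (1 + C * (b - a)) :=
    one_le_mul_of_one_le_of_one_le ((one_le_div ha).2 hab)
      (le_add_of_nonneg_right (mul_nonneg hC (by linarith)))
  have hxy : x ≤ b / a * (1 + C * (b - a)) * y := by
    calc x = b / a * (a / b * x) := by field_simp
      _ ≤ b / a * ((1 + C * (b - a)) * y) := by gcongr
      _ = b / a * (1 + C * (b - a)) * y := by ring
  have hθ' : b / a * (1 + C * (b - a)) - 1 ≤ (1 + C * P) * (b - a) / a := by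
    rw [show b / a * (1 + C * (b - a)) - 1 = (1 + C * b) * (b - a) / a by field_simp; ring]
    gcongr
  have := logb_one_add_le_of_le_mul hx hy hθ hxy
  rw [mul_div_assoc] at hθ' ⊢
  linarith

end Transfer

section Multicast

variable {U G : ℕ} {K : Fin G → ℕ} {N T : ℕ} {P : ℝ}
  {η Emu : ∀ j : Fin G, Fin (K j) → ℝ} {Eun : Fin U → ℝ}

def minSINR (N : ℕ) (η : ∀ j : Fin G, Fin (K j) → ℝ) (τ : ℕ)
    (qup : ∀ j : Fin G, Fin (K j) → ℝ) (qdl : Fin G → ℝ) (p : ℝ) : ℝ :=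
  ⨅ j, ⨅ k, sinr N (qdl j) (xiX η τ qup j k) (η j k) p

lemma OmuX_eq (τ : ℕ) (qup : ∀ j : Fin G, Fin (K j) → ℝ) (qdl : Fin G → ℝ) (pdl : Fin U → ℝ) :
    OmuX N T η τ qup qdl pdl =
      (1 - (τ : ℝ) / T) * Real.logb 2 (1 + minSINR N η τ qup qdl (∑ m, pdl m + ∑ i, qdl i)) :=
  rfl

lemma minSINR_nonneg {τ : ℕ} {qup : ∀ j : Fin G, Fin (K j) → ℝ} {qdl : Fin G → ℝ} {p : ℝ}
    (hη : ∀ j k, 0 ≤ η j k) (hqup : ∀ j k, 0 ≤ qup j k) (hq : ∀ j, 0 ≤ qdl j) (hp : 0 ≤ p) :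
    0 ≤ minSINR N η τ qup qdl p :=
  Real.iInf_nonneg fun j => Real.iInf_nonneg fun k =>
    sinr_nonneg (Nat.cast_nonneg N) (hq j) (xiX_nonneg hη hqup j k) (hη j k) hp

lemma mul_minSINR_le {τ : ℕ} {qup : ∀ j : Fin G, Fin (K j) → ℝ} {qdl : Fin G → ℝ}
    {ρ κ p p' : ℝ} (hη : ∀ j k, 0 ≤ η j k) (hqup : ∀ j k, 0 ≤ qup j k) (hq : ∀ j, 0 ≤ qdl j)
    (hρ : 0 ≤ ρ) (hκ : 0 ≤ κ) (hp : 0 ≤ p) (hp' : 0 ≤ p')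
    (h : ∀ j k, 1 + η j k * p' ≤ κ * (1 + η j k * p)) :
    ρ * minSINR N η τ qup qdl p ≤ κ * minSINR N η τ qup (fun j => ρ * qdl j) p' :=
  mul_iInf₂_le_mul_iInf₂ hρ hκ fun j k =>
    mul_sinr_le hρ (Nat.cast_nonneg N) (hq j) (xiX_nonneg hη hqup j k) (hη j k) hp hp' (h j k)

/-- `VmuX N T P η Emu β Eun α s` is by definition the supremum of this set. -/
def muValues (N T : ℕ) (P : ℝ) (η Emu : ∀ j : Fin G, Fin (K j) → ℝ) (Eun : Fin U → ℝ)
    (s : ℝ) : Set ℝ :=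
  {v : ℝ | ∃ (τ : ℕ) (qup : ∀ j : Fin G, Fin (K j) → ℝ) (qdl : Fin G → ℝ)
      (pup pdl : Fin U → ℝ),
    feasX T P Emu Eun τ qup qdl pup pdl ∧
    (∑ j, qdl j ≤ s) ∧ (∑ m, pdl m = P - s) ∧
    v = OmuX N T η τ qup qdl pdl}

lemma le_of_mem_muValues (hη : ∀ j k, 0 ≤ η j k) {s v : ℝ}
    (hv : v ∈ muValues N T P η Emu Eun s) (j₀ : Fin G) (k₀ : Fin (K j₀)) :
    v ≤ 2 * N * η j₀ k₀ * s := by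
  obtain ⟨τ, qup, qdl, pup, pdl, ⟨-, -, hq, hp, hqup, -, -⟩, hqs, -, rfl⟩ := hv
  have hqup' : ∀ j k, 0 ≤ qup j k := fun j k => (hqup j k).1
  have hPtot : 0 ≤ ∑ m, pdl m + ∑ i, qdl i :=
    add_nonneg (sum_nonneg fun m _ => hp m) (sum_nonneg fun j _ => hq j)
  set m := minSINR N η τ qup qdl (∑ m, pdl m + ∑ i, qdl i)
  have hm0 : 0 ≤ m := minSINR_nonneg hη hqup' hq hPtot
  have hm : m ≤ N * η j₀ k₀ * s :=
    (iInf₂_le_of_finite _ j₀ k₀).trans <| sinr_le (Nat.cast_nonneg N) (hq j₀)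
      ((single_le_sum (fun j _ => hq j) (mem_univ j₀)).trans hqs)
      (xiX_nonneg hη hqup' j₀ k₀) (xiX_le hη hqup' j₀ k₀) hPtot
  rw [OmuX_eq]
  calc (1 - (τ : ℝ) / T) * Real.logb 2 (1 + m) ≤ Real.logb 2 (1 + m) :=
        mul_le_of_le_one_left (Real.logb_nonneg one_lt_two (by linarith))
          (one_sub_div_le_one τ T)
    _ ≤ 2 * m := logb_one_add_le_two_mul hm0
    _ ≤ 2 * N * η j₀ k₀ * s := by linarith

lemma zero_mem_muValues (hU : 0 < U) (hUGT : U + G ≤ T) (hEmu : ∀ j k, 0 ≤ Emu j k)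
    (hEun : ∀ m, 0 ≤ Eun m) {s : ℝ} (hs : 0 ≤ s) (hsP : s ≤ P) :
    (0 : ℝ) ∈ muValues N T P η Emu Eun s := by
  have hp : ∑ _m : Fin U, (P - s) / U = P - s := sum_const_div_natCast hU _
  refine ⟨U + G, fun _ _ => 0, fun _ => 0, fun _ => 0, fun _ => (P - s) / U,
    ⟨le_rfl, hUGT, fun _ => le_rfl, fun _ => div_nonneg (by linarith) (Nat.cast_nonneg U),
      fun j k => ⟨le_rfl, by simpa using hEmu j k⟩, fun m => ⟨le_rfl, by simpa using hEun m⟩,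
      by simp [hp]; linarith⟩, by simpa using hs, hp, ?_⟩
  simp [OmuX]

lemma exists_pos_mem_muValues (hU : 0 < U) (hG : 0 < G) (hK : ∀ j, 0 < K j) (hN : 0 < N)
    (hT : U + G < T) (hη : ∀ j k, 0 < η j k) (hEmu : ∀ j k, 0 < Emu j k)
    (hEun : ∀ m, 0 ≤ Eun m) {s : ℝ} (hs : 0 < s) (hsP : s ≤ P) :
    ∃ v ∈ muValues N T P η Emu Eun s, 0 < v := by
  have hτ : (0 : ℝ) < (T - 1 : ℕ) := by exact_mod_cast (by omega : 0 < T - 1)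
  have hq : ∑ _j : Fin G, s / G = s := sum_const_div_natCast hG s
  have hp : ∑ _m : Fin U, (P - s) / U = P - s := sum_const_div_natCast hU _
  set qup : ∀ j : Fin G, Fin (K j) → ℝ := fun j k => Emu j k / (T - 1 : ℕ)
  have hqup : ∀ j k, 0 < qup j k := fun j k => div_pos (hEmu j k) hτ
  refine ⟨_, ⟨T - 1, qup, fun _ => s / G, fun _ => 0, fun _ => (P - s) / U,
    ⟨by omega, by omega, fun _ => by positivity, fun _ => div_nonneg (by linarith) (by positivity),
      fun j k => ⟨(hqup j k).le, (mul_div_cancel₀ _ hτ.ne').le⟩,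
      fun m => ⟨le_rfl, by simpa using hEun m⟩, by rw [hp, hq]; linarith⟩, hq.le, hp, rfl⟩, ?_⟩
  have : Nonempty (Fin G) := Fin.pos_iff_nonempty.1 hG
  have : ∀ j, Nonempty (Fin (K j)) := fun j => Fin.pos_iff_nonempty.1 (hK j)
  have hm : 0 < minSINR N η (T - 1) qup (fun _ => s / G) (P - s + s) :=
    iInf₂_pos_of_finite fun j k => sinr_pos (by exact_mod_cast hN) (by positivity)
      (xiX_pos hη (fun j k => (hqup j k).le) (by omega) (hqup j k)) (hη j k).le (by linarith)
  rw [OmuX_eq, hp, hq]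
  refine mul_pos ?_ (Real.logb_pos one_lt_two (by linarith))
  rw [sub_pos, div_lt_one (by exact_mod_cast (by omega : 0 < T))]
  exact_mod_cast (by omega : T - 1 < T)

lemma OmuX_add_le_of_scale {τ : ℕ} {qup : ∀ j : Fin G, Fin (K j) → ℝ} {qdl : Fin G → ℝ}
    {pdl pdl' : Fin U → ℝ} {ρ r : ℝ} (hη : ∀ j k, 0 ≤ η j k) (hqup : ∀ j k, 0 ≤ qup j k)
    (hq : ∀ j, 0 ≤ qdl j) (hp : ∀ m, 0 ≤ pdl m) (hp' : ∀ m, 0 ≤ pdl' m) (hτT : τ ≤ T)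
    (hρ : 1 ≤ ρ) (htot : ∑ m, pdl' m + ∑ j, ρ * qdl j ≤ ∑ m, pdl m + ∑ j, qdl j)
    (hr : 0 < r) (hrv : r ≤ OmuX N T η τ qup qdl pdl) :
    OmuX N T η τ qup qdl pdl + (T : ℝ)⁻¹ * logGain ρ (r / 2) ≤
      OmuX N T η τ qup (fun j => ρ * qdl j) pdl' := by
  have hρ0 : 0 ≤ ρ := by linarith
  have hPtot : 0 ≤ ∑ m, pdl m + ∑ j, qdl j :=
    add_nonneg (sum_nonneg fun m _ => hp m) (sum_nonneg fun j _ => hq j)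
  have hPtot' : 0 ≤ ∑ m, pdl' m + ∑ j, ρ * qdl j :=
    add_nonneg (sum_nonneg fun m _ => hp' m) (sum_nonneg fun j _ => mul_nonneg hρ0 (hq j))
  have hm := mul_minSINR_le (N := N) (τ := τ) (ρ := ρ) (κ := 1) hη hqup hq hρ0 zero_le_one
    hPtot hPtot' fun j k => by
      rw [one_mul]
      linarith [mul_le_mul_of_nonneg_left htot (hη j k)]
  simp only [OmuX_eq] at hrv ⊢
  set m := minSINR N η τ qup qdl (∑ m, pdl m + ∑ i, qdl i)
  set m' := minSINR N η τ qup (fun j => ρ * qdl j) (∑ m, pdl' m + ∑ j, ρ * qdl j)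
  have hm0 : 0 ≤ m := minSINR_nonneg hη hqup hq hPtot
  have hrm : r ≤ Real.logb 2 (1 + m) := hrv.trans
    (mul_le_of_le_one_left (Real.logb_nonneg one_lt_two (by linarith)) (one_sub_div_le_one τ T))
  refine one_sub_div_mul_add_le hτT (hr.trans_le hrv) (logGain_nonneg hρ (by positivity)) ?_
  calc Real.logb 2 (1 + m) + logGain ρ (r / 2) ≤ Real.logb 2 (1 + ρ * m) :=
        logb_add_logGain_le hρ hm0 hr hrm
    _ ≤ Real.logb 2 (1 + m') :=
        Real.logb_le_logb_of_le one_lt_two (by linarith [mul_nonneg hρ0 hm0]) (by linarith)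

lemma OmuX_le_add_of_scale {τ : ℕ} {qup : ∀ j : Fin G, Fin (K j) → ℝ} {qdl : Fin G → ℝ}
    {pdl pdl' : Fin U → ℝ} {a b C : ℝ} (hη : ∀ j k, 0 ≤ η j k) (hqup : ∀ j k, 0 ≤ qup j k)
    (hq : ∀ j, 0 ≤ qdl j) (hp : ∀ m, 0 ≤ pdl m) (hp' : ∀ m, 0 ≤ pdl' m) (hτT : τ ≤ T)
    (hC0 : 0 ≤ C) (hC : ∀ j k, η j k ≤ C) (ha : 0 < a) (hab : a ≤ b) (hbP : b ≤ P)
    (htot : ∑ m, pdl' m + ∑ j, a / b * qdl j ≤ ∑ m, pdl m + ∑ j, qdl j + (b - a)) :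
    OmuX N T η τ qup qdl pdl ≤
      OmuX N T η τ qup (fun j => a / b * qdl j) pdl' + 2 * (1 + C * P) * (b - a) / a := by
  have hρ0 : 0 ≤ a / b := div_nonneg ha.le (by linarith)
  have hPtot : 0 ≤ ∑ m, pdl m + ∑ j, qdl j :=
    add_nonneg (sum_nonneg fun m _ => hp m) (sum_nonneg fun j _ => hq j)
  have hPtot' : 0 ≤ ∑ m, pdl' m + ∑ j, a / b * qdl j :=
    add_nonneg (sum_nonneg fun m _ => hp' m) (sum_nonneg fun j _ => mul_nonneg hρ0 (hq j))
  have hm := mul_minSINR_le (N := N) (τ := τ) (ρ := a / b) (κ := 1 + C * (b - a)) hη hqup hq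
    hρ0 (by nlinarith) hPtot hPtot'
    fun j k => one_add_mul_le_mul_one_add (hη j k) (hC j k) hPtot (by linarith) htot
  simp only [OmuX_eq]
  exact one_sub_div_mul_le_add hτT (two_mul_one_add_mul_sub_div_nonneg ha hab hbP hC0)
    (logb_one_add_le_of_div_mul_le ha hab hbP hC0 (minSINR_nonneg hη hqup hq hPtot)
      (minSINR_nonneg hη hqup (fun j => mul_nonneg hρ0 (hq j)) hPtot') hm)

lemma muValues_gain (hT : 0 < T) (hη : ∀ j k, 0 ≤ η j k) {a b : ℝ} (ha : 0 < a) (hab : a < b)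
    (hbP : b ≤ P) {r : ℝ} (hr : 0 < r) :
    ∃ δ > 0, ∀ v ∈ muValues N T P η Emu Eun a, r ≤ v →
      ∃ v' ∈ muValues N T P η Emu Eun b, v + δ ≤ v' := by
  have hρ : 1 < b / a := (one_lt_div ha).2 hab
  refine ⟨(T : ℝ)⁻¹ * logGain (b / a) (r / 2),
    mul_pos (by positivity) (logGain_pos hρ (half_pos hr)), ?_⟩
  rintro v ⟨τ, qup, qdl, pup, pdl, ⟨hUGτ, hτT, hq, hp, hqup, hpup, -⟩, hqa, hpa, rfl⟩ hrv
  -- Scale the multicast powers by `b / a` and the unicast powers down to the budget `P - b`;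
  -- the total power does not grow.
  set ρ := b / a
  set σ := (P - b) / (P - a)
  have hρ0 : 0 ≤ ρ := by positivity
  have hσ : 0 ≤ σ := div_nonneg (by linarith) (by linarith)
  have hq' : ∑ j, ρ * qdl j = ρ * ∑ j, qdl j := (mul_sum ..).symm
  have hp' : ∑ m, σ * pdl m = P - b := by
    rw [← mul_sum, hpa, div_mul_cancel₀ _ (by linarith : P - a ≠ 0)]
  have hρa : ρ * a = b := div_mul_cancel₀ b ha.ne'
  have hρQ : ρ * ∑ j, qdl j ≤ b := hρa ▸ mul_le_mul_of_nonneg_left hqa hρ0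
  refine ⟨_, ⟨τ, qup, fun j => ρ * qdl j, pup, fun m => σ * pdl m,
    ⟨hUGτ, hτT, fun j => mul_nonneg hρ0 (hq j), fun m => mul_nonneg hσ (hp m), hqup, hpup,
      by rw [hp', hq']; linarith⟩, hq'.trans_le hρQ, hp', rfl⟩, ?_⟩
  refine OmuX_add_le_of_scale hη (fun j k => (hqup j k).1) hq hp (fun m => mul_nonneg hσ (hp m))
    hτT hρ.le ?_ hr hrv
  rw [hp', hq', hpa]
  nlinarith [mul_le_mul_of_nonneg_left hqa (by linarith : (0 : ℝ) ≤ ρ - 1)]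

lemma muValues_loss (hU : 0 < U) (hη : ∀ j k, 0 ≤ η j k) {C : ℝ} (hC0 : 0 ≤ C)
    (hC : ∀ j k, η j k ≤ C) {a b : ℝ} (ha : 0 < a) (hab : a ≤ b) (hbP : b ≤ P) :
    ∀ v' ∈ muValues N T P η Emu Eun b,
      ∃ v ∈ muValues N T P η Emu Eun a, v' ≤ v + 2 * (1 + C * P) * (b - a) / a := by
  rintro v' ⟨τ, qup, qdl, pup, pdl, ⟨hUGτ, hτT, hq, hp, hqup, hpup, -⟩, hqb, hpb, rfl⟩
  have hb : 0 < b := ha.trans_le hab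
  -- Scale the multicast powers by `a / b` and spread `P - a` evenly over the unicast users;
  -- the total power grows by at most `b - a`.
  set ρ := a / b
  have hρ0 : 0 ≤ ρ := by positivity
  have hQ : 0 ≤ ∑ j, qdl j := sum_nonneg fun j _ => hq j
  have hq' : ∑ j, ρ * qdl j = ρ * ∑ j, qdl j := (mul_sum ..).symm
  have hp' : ∑ _m : Fin U, (P - a) / U = P - a := sum_const_div_natCast hU _
  have hρQ : ρ * ∑ j, qdl j ≤ a :=
    div_mul_cancel₀ a hb.ne' ▸ mul_le_mul_of_nonneg_left hqb hρ0
  have hρQ' : ρ * ∑ j, qdl j ≤ ∑ j, qdl j := mul_le_of_le_one_left hQ ((div_le_one hb).2 hab)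
  have hpdl : ∀ _m : Fin U, 0 ≤ (P - a) / U := fun _ => div_nonneg (by linarith) (by positivity)
  refine ⟨_, ⟨τ, qup, fun j => ρ * qdl j, pup, fun _ => (P - a) / U,
    ⟨hUGτ, hτT, fun j => mul_nonneg hρ0 (hq j), hpdl, hqup, hpup, by rw [hp', hq']; linarith⟩,
    hq'.trans_le hρQ, hp', rfl⟩, ?_⟩
  refine OmuX_le_add_of_scale hη (fun j k => (hqup j k).1) hq hp hpdl hτT hC0 hC ha hab hbP ?_
  rw [hp', hq', hpb]
  linarith

end Multicast

section Unicast

variable {U G : ℕ} {K : Fin G → ℕ} {N T : ℕ} {P : ℝ}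
  {Emu : ∀ j : Fin G, Fin (K j) → ℝ} {β Eun α : Fin U → ℝ}

lemma OunX_eq (τ : ℕ) (pup pdl : Fin U → ℝ) (qdl : Fin G → ℝ) :
    OunX N T β α τ pup pdl qdl = (1 - (τ : ℝ) / T) * ∑ m, α m *
      Real.logb 2 (1 + sinr N (pdl m) (thetaX β τ pup m) (β m) (∑ u, pdl u + ∑ j, qdl j)) :=
  rfl

/-- `VunX N T P η Emu β Eun α s` is by definition the supremum of this set. -/
def unValues (N T : ℕ) (P : ℝ) (Emu : ∀ j : Fin G, Fin (K j) → ℝ) (β Eun α : Fin U → ℝ)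
    (s : ℝ) : Set ℝ :=
  {v : ℝ | ∃ (τ : ℕ) (qup : ∀ j : Fin G, Fin (K j) → ℝ) (qdl : Fin G → ℝ)
      (pup pdl : Fin U → ℝ),
    feasX T P Emu Eun τ qup qdl pup pdl ∧
    (∑ m, pdl m ≤ s) ∧ (∑ j, qdl j = P - s) ∧
    v = OunX N T β α τ pup pdl qdl}

lemma le_of_mem_unValues (hβ : ∀ m, 0 ≤ β m) (hα : ∀ m, 0 ≤ α m) {s v : ℝ}
    (hv : v ∈ unValues N T P Emu β Eun α s) : v ≤ 2 * N * (∑ m, α m * β m) * s := by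
  obtain ⟨τ, qup, qdl, pup, pdl, ⟨-, -, hq, hp, -, hpup, -⟩, hps, -, rfl⟩ := hv
  have hpup' : ∀ m, 0 ≤ pup m := fun m => (hpup m).1
  have hPtot : 0 ≤ ∑ u, pdl u + ∑ j, qdl j :=
    add_nonneg (sum_nonneg fun m _ => hp m) (sum_nonneg fun j _ => hq j)
  set t := fun m => sinr N (pdl m) (thetaX β τ pup m) (β m) (∑ u, pdl u + ∑ j, qdl j)
  have ht0 : ∀ m, 0 ≤ t m := fun m =>
    sinr_nonneg (Nat.cast_nonneg N) (hp m) (thetaX_nonneg hβ hpup' m) (hβ m) hPtot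
  have ht : ∀ m, t m ≤ N * β m * s := fun m =>
    sinr_le (Nat.cast_nonneg N) (hp m) ((single_le_sum (fun u _ => hp u) (mem_univ m)).trans hps)
      (thetaX_nonneg hβ hpup' m) (thetaX_le hβ hpup' m) hPtot
  have hL : 0 ≤ ∑ m, α m * Real.logb 2 (1 + t m) := sum_nonneg fun m _ =>
    mul_nonneg (hα m) (Real.logb_nonneg one_lt_two (by linarith [ht0 m]))
  rw [OunX_eq]
  calc (1 - (τ : ℝ) / T) * ∑ m, α m * Real.logb 2 (1 + t m)
      ≤ ∑ m, α m * Real.logb 2 (1 + t m) := mul_le_of_le_one_left hL (one_sub_div_le_one τ T)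
    _ ≤ ∑ m, α m * (2 * (N * β m * s)) := sum_le_sum fun m _ => mul_le_mul_of_nonneg_left
        ((logb_one_add_le_two_mul (ht0 m)).trans (by linarith [ht m])) (hα m)
    _ = 2 * N * (∑ m, α m * β m) * s := by
        rw [mul_sum, sum_mul]
        exact sum_congr rfl fun m _ => by ring

lemma zero_mem_unValues (hG : 0 < G) (hUGT : U + G ≤ T) (hEmu : ∀ j k, 0 ≤ Emu j k)
    (hEun : ∀ m, 0 ≤ Eun m) {s : ℝ} (hs : 0 ≤ s) (hsP : s ≤ P) :
    (0 : ℝ) ∈ unValues N T P Emu β Eun α s := by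
  have hq : ∑ _j : Fin G, (P - s) / G = P - s := sum_const_div_natCast hG _
  refine ⟨U + G, fun _ _ => 0, fun _ => (P - s) / G, fun _ => 0, fun _ => 0,
    ⟨le_rfl, hUGT, fun _ => div_nonneg (by linarith) (Nat.cast_nonneg G), fun _ => le_rfl,
      fun j k => ⟨le_rfl, by simpa using hEmu j k⟩, fun m => ⟨le_rfl, by simpa using hEun m⟩,
      by simp [hq]; linarith⟩, by simpa using hs, hq, ?_⟩
  simp [OunX]

lemma exists_pos_mem_unValues (hU : 0 < U) (hG : 0 < G) (hN : 0 < N) (hT : U + G < T)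
    (hβ : ∀ m, 0 < β m) (hα : ∀ m, 0 < α m) (hEmu : ∀ j k, 0 ≤ Emu j k)
    (hEun : ∀ m, 0 < Eun m) {s : ℝ} (hs : 0 < s) (hsP : s ≤ P) :
    ∃ v ∈ unValues N T P Emu β Eun α s, 0 < v := by
  have hτ : (0 : ℝ) < (T - 1 : ℕ) := by exact_mod_cast (by omega : 0 < T - 1)
  have hp : ∑ _m : Fin U, s / U = s := sum_const_div_natCast hU s
  have hq : ∑ _j : Fin G, (P - s) / G = P - s := sum_const_div_natCast hG _
  set pup : Fin U → ℝ := fun m => Eun m / (T - 1 : ℕ)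
  have hpup : ∀ m, 0 < pup m := fun m => div_pos (hEun m) hτ
  refine ⟨_, ⟨T - 1, fun _ _ => 0, fun _ => (P - s) / G, pup, fun _ => s / U,
    ⟨by omega, by omega, fun _ => div_nonneg (by linarith) (by positivity),
      fun _ => by positivity, fun j k => ⟨le_rfl, by simpa using hEmu j k⟩,
      fun m => ⟨(hpup m).le, (mul_div_cancel₀ _ hτ.ne').le⟩, by rw [hp, hq]; linarith⟩,
    hp.le, hq, rfl⟩, ?_⟩
  have : Nonempty (Fin U) := Fin.pos_iff_nonempty.1 hU
  rw [OunX_eq, hp, hq]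
  refine mul_pos ?_ (sum_pos (fun m _ => mul_pos (hα m) (Real.logb_pos one_lt_two
    (lt_add_of_pos_right 1 (sinr_pos (by exact_mod_cast hN) (by positivity)
      (thetaX_pos hβ (by omega) (hpup m)) (hβ m).le (by linarith))))) univ_nonempty)
  rw [sub_pos, div_lt_one (by exact_mod_cast (by omega : 0 < T))]
  exact_mod_cast (by omega : T - 1 < T)

lemma OunX_add_le_of_scale [Nonempty (Fin U)] {τ : ℕ} {pup pdl : Fin U → ℝ}
    {qdl qdl' : Fin G → ℝ} {α₀ ρ r : ℝ} (hβ : ∀ m, 0 ≤ β m) (hα₀ : 0 ≤ α₀)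
    (hα : ∀ m, α₀ ≤ α m) (hpup : ∀ m, 0 ≤ pup m) (hp : ∀ m, 0 ≤ pdl m) (hq : ∀ j, 0 ≤ qdl j)
    (hq' : ∀ j, 0 ≤ qdl' j) (hτT : τ ≤ T) (hρ : 1 ≤ ρ)
    (htot : ∑ m, ρ * pdl m + ∑ j, qdl' j ≤ ∑ m, pdl m + ∑ j, qdl j)
    (hr : 0 < r) (hrv : r ≤ OunX N T β α τ pup pdl qdl) :
    OunX N T β α τ pup pdl qdl + (T : ℝ)⁻¹ * (α₀ * logGain ρ (r / (2 * ∑ m, α m))) ≤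
      OunX N T β α τ pup (fun m => ρ * pdl m) qdl' := by
  have hρ0 : 0 ≤ ρ := by linarith
  have hα' : ∀ m, 0 ≤ α m := fun m => hα₀.trans (hα m)
  have hPtot : 0 ≤ ∑ u, pdl u + ∑ j, qdl j :=
    add_nonneg (sum_nonneg fun m _ => hp m) (sum_nonneg fun j _ => hq j)
  have hPtot' : 0 ≤ ∑ u, ρ * pdl u + ∑ j, qdl' j :=
    add_nonneg (sum_nonneg fun m _ => mul_nonneg hρ0 (hp m)) (sum_nonneg fun j _ => hq' j)
  simp only [OunX_eq] at hrv ⊢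
  set t := fun m => sinr N (pdl m) (thetaX β τ pup m) (β m) (∑ u, pdl u + ∑ j, qdl j)
  set t' := fun m =>
    sinr N (ρ * pdl m) (thetaX β τ pup m) (β m) (∑ u, ρ * pdl u + ∑ j, qdl' j)
  have ht0 : ∀ m, 0 ≤ t m := fun m =>
    sinr_nonneg (Nat.cast_nonneg N) (hp m) (thetaX_nonneg hβ hpup m) (hβ m) hPtot
  have htt' : ∀ m, ρ * t m ≤ t' m := fun m => by
    simpa using mul_sinr_le (κ := 1) hρ0 (Nat.cast_nonneg N) (hp m) (thetaX_nonneg hβ hpup m)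
      (hβ m) hPtot hPtot' (by rw [one_mul]; linarith [mul_le_mul_of_nonneg_left htot (hβ m)])
  have hL : 0 ≤ ∑ m, α m * Real.logb 2 (1 + t m) := sum_nonneg fun m _ =>
    mul_nonneg (hα' m) (Real.logb_nonneg one_lt_two (by linarith [ht0 m]))
  refine one_sub_div_mul_add_le hτT (hr.trans_le hrv)
    (mul_nonneg hα₀ (logGain_nonneg hρ
      (div_nonneg hr.le (mul_nonneg zero_le_two (sum_nonneg fun m _ => hα' m))))) ?_
  calc ∑ m, α m * Real.logb 2 (1 + t m) + α₀ * logGain ρ (r / (2 * ∑ m, α m))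
      ≤ ∑ m, α m * Real.logb 2 (1 + ρ * t m) :=
        sum_mul_logb_add_logGain_le hρ hα₀ hα ht0 hr
          (hrv.trans (mul_le_of_le_one_left hL (one_sub_div_le_one τ T)))
    _ ≤ ∑ m, α m * Real.logb 2 (1 + t' m) := sum_le_sum fun m _ =>
        mul_le_mul_of_nonneg_left (Real.logb_le_logb_of_le one_lt_two
          (by linarith [mul_nonneg hρ0 (ht0 m)]) (by linarith [htt' m])) (hα' m)

lemma OunX_le_add_of_scale {τ : ℕ} {pup pdl : Fin U → ℝ} {qdl qdl' : Fin G → ℝ} {a b C : ℝ}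
    (hβ : ∀ m, 0 ≤ β m) (hα : ∀ m, 0 ≤ α m) (hpup : ∀ m, 0 ≤ pup m) (hp : ∀ m, 0 ≤ pdl m)
    (hq : ∀ j, 0 ≤ qdl j) (hq' : ∀ j, 0 ≤ qdl' j) (hτT : τ ≤ T) (hC0 : 0 ≤ C)
    (hC : ∀ m, β m ≤ C) (ha : 0 < a) (hab : a ≤ b) (hbP : b ≤ P)
    (htot : ∑ m, a / b * pdl m + ∑ j, qdl' j ≤ ∑ m, pdl m + ∑ j, qdl j + (b - a)) :
    OunX N T β α τ pup pdl qdl ≤ OunX N T β α τ pup (fun m => a / b * pdl m) qdl' +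
      (∑ m, α m) * (2 * (1 + C * P)) * (b - a) / a := by
  have hρ0 : 0 ≤ a / b := div_nonneg ha.le (by linarith)
  have hPtot : 0 ≤ ∑ u, pdl u + ∑ j, qdl j :=
    add_nonneg (sum_nonneg fun m _ => hp m) (sum_nonneg fun j _ => hq j)
  have hPtot' : 0 ≤ ∑ u, a / b * pdl u + ∑ j, qdl' j :=
    add_nonneg (sum_nonneg fun m _ => mul_nonneg hρ0 (hp m)) (sum_nonneg fun j _ => hq' j)
  simp only [OunX_eq]
  set t := fun m => sinr N (pdl m) (thetaX β τ pup m) (β m) (∑ u, pdl u + ∑ j, qdl j)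
  set t' := fun m =>
    sinr N (a / b * pdl m) (thetaX β τ pup m) (β m) (∑ u, a / b * pdl u + ∑ j, qdl' j)
  have hloss : ∀ m, Real.logb 2 (1 + t m) ≤
      Real.logb 2 (1 + t' m) + 2 * (1 + C * P) * (b - a) / a := fun m =>
    logb_one_add_le_of_div_mul_le ha hab hbP hC0
      (sinr_nonneg (Nat.cast_nonneg N) (hp m) (thetaX_nonneg hβ hpup m) (hβ m) hPtot)
      (sinr_nonneg (Nat.cast_nonneg N) (mul_nonneg hρ0 (hp m)) (thetaX_nonneg hβ hpup m)
        (hβ m) hPtot')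
      (mul_sinr_le hρ0 (Nat.cast_nonneg N) (hp m) (thetaX_nonneg hβ hpup m) (hβ m) hPtot hPtot'
        (one_add_mul_le_mul_one_add (hβ m) (hC m) hPtot (by linarith) htot))
  have hE : 0 ≤ (∑ m, α m) * (2 * (1 + C * P)) * (b - a) / a := by
    rw [mul_assoc, mul_div_assoc]
    exact mul_nonneg (sum_nonneg fun m _ => hα m)
      (two_mul_one_add_mul_sub_div_nonneg ha hab hbP hC0)
  refine one_sub_div_mul_le_add hτT hE ?_
  calc ∑ m, α m * Real.logb 2 (1 + t m)
      ≤ ∑ m, (α m * Real.logb 2 (1 + t' m) + α m * (2 * (1 + C * P) * (b - a) / a)) :=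
        sum_le_sum fun m _ => (mul_le_mul_of_nonneg_left (hloss m) (hα m)).trans_eq (mul_add ..)
    _ = ∑ m, α m * Real.logb 2 (1 + t' m) + (∑ m, α m) * (2 * (1 + C * P)) * (b - a) / a := by
        rw [sum_add_distrib, ← sum_mul]
        ring

lemma unValues_gain (hU : 0 < U) (hT : 0 < T) (hβ : ∀ m, 0 ≤ β m) (hα : ∀ m, 0 < α m)
    {a b : ℝ} (ha : 0 < a) (hab : a < b) (hbP : b ≤ P) {r : ℝ} (hr : 0 < r) :
    ∃ δ > 0, ∀ v ∈ unValues N T P Emu β Eun α a, r ≤ v →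
      ∃ v' ∈ unValues N T P Emu β Eun α b, v + δ ≤ v' := by
  have : Nonempty (Fin U) := Fin.pos_iff_nonempty.1 hU
  obtain ⟨m₀, hm₀⟩ := Finite.exists_min α
  have hA : 0 < ∑ m, α m := sum_pos (fun m _ => hα m) univ_nonempty
  have hρ : 1 < b / a := (one_lt_div ha).2 hab
  refine ⟨(T : ℝ)⁻¹ * (α m₀ * logGain (b / a) (r / (2 * ∑ m, α m))),
    mul_pos (by positivity) (mul_pos (hα m₀) (logGain_pos hρ (by positivity))), ?_⟩
  rintro v ⟨τ, qup, qdl, pup, pdl, ⟨hUGτ, hτT, hq, hp, hqup, hpup, -⟩, hpa, hqa, rfl⟩ hrv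
  -- Scale the unicast powers by `b / a` and the multicast powers down to the budget `P - b`;
  -- the total power does not grow.
  set ρ := b / a
  set σ := (P - b) / (P - a)
  have hρ0 : 0 ≤ ρ := by positivity
  have hσ : 0 ≤ σ := div_nonneg (by linarith) (by linarith)
  have hp' : ∑ m, ρ * pdl m = ρ * ∑ m, pdl m := (mul_sum ..).symm
  have hq' : ∑ j, σ * qdl j = P - b := by
    rw [← mul_sum, hqa, div_mul_cancel₀ _ (by linarith : P - a ≠ 0)]
  have hρa : ρ * a = b := div_mul_cancel₀ b ha.ne'
  have hρQ : ρ * ∑ m, pdl m ≤ b := hρa ▸ mul_le_mul_of_nonneg_left hpa hρ0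
  refine ⟨_, ⟨τ, qup, fun j => σ * qdl j, pup, fun m => ρ * pdl m,
    ⟨hUGτ, hτT, fun j => mul_nonneg hσ (hq j), fun m => mul_nonneg hρ0 (hp m), hqup, hpup,
      by rw [hp', hq']; linarith⟩, hp'.trans_le hρQ, hq', rfl⟩, ?_⟩
  refine OunX_add_le_of_scale hβ (hα m₀).le hm₀ (fun m => (hpup m).1) hp hq
    (fun j => mul_nonneg hσ (hq j)) hτT hρ.le ?_ hr hrv
  rw [hp', hq', hqa]
  nlinarith [mul_le_mul_of_nonneg_left hpa (by linarith : (0 : ℝ) ≤ ρ - 1)]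

lemma unValues_loss (hG : 0 < G) (hβ : ∀ m, 0 ≤ β m) (hα : ∀ m, 0 ≤ α m) {C : ℝ}
    (hC0 : 0 ≤ C) (hC : ∀ m, β m ≤ C) {a b : ℝ} (ha : 0 < a) (hab : a ≤ b) (hbP : b ≤ P) :
    ∀ v' ∈ unValues N T P Emu β Eun α b, ∃ v ∈ unValues N T P Emu β Eun α a,
      v' ≤ v + (∑ m, α m) * (2 * (1 + C * P)) * (b - a) / a := by
  rintro v' ⟨τ, qup, qdl, pup, pdl, ⟨hUGτ, hτT, hq, hp, hqup, hpup, -⟩, hpb, hqb, rfl⟩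
  have hb : 0 < b := ha.trans_le hab
  -- Scale the unicast powers by `a / b` and spread `P - a` evenly over the multicast groups;
  -- the total power grows by at most `b - a`.
  set ρ := a / b
  have hρ0 : 0 ≤ ρ := by positivity
  have hQ : 0 ≤ ∑ m, pdl m := sum_nonneg fun m _ => hp m
  have hp' : ∑ m, ρ * pdl m = ρ * ∑ m, pdl m := (mul_sum ..).symm
  have hq' : ∑ _j : Fin G, (P - a) / G = P - a := sum_const_div_natCast hG _
  have hρQ : ρ * ∑ m, pdl m ≤ a :=
    div_mul_cancel₀ a hb.ne' ▸ mul_le_mul_of_nonneg_left hpb hρ0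
  have hρQ' : ρ * ∑ m, pdl m ≤ ∑ m, pdl m := mul_le_of_le_one_left hQ ((div_le_one hb).2 hab)
  have hqdl : ∀ _j : Fin G, 0 ≤ (P - a) / G := fun _ => div_nonneg (by linarith) (by positivity)
  refine ⟨_, ⟨τ, qup, fun _ => (P - a) / G, pup, fun m => ρ * pdl m,
    ⟨hUGτ, hτT, hqdl, fun m => mul_nonneg hρ0 (hp m), hqup, hpup, by rw [hp', hq']; linarith⟩,
    hp'.trans_le hρQ, hq', rfl⟩, ?_⟩
  refine OunX_le_add_of_scale hβ hα (fun m => (hpup m).1) hp hq hqdl hτT hC0 hC ha hab hbP ?_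
  rw [hp', hq', hqb]
  linarith

end Unicast

/-- if `U+G < T`, the value functions `V_mu` and `V_un` are strictly
increasing and continuous on `[0,P]`. -/
theorem moop_value_functions_strictMono_continuous
    (U G : ℕ) (hU : 1 ≤ U) (hG : 1 ≤ G) (K : Fin G → ℕ) (hK : ∀ j, 1 ≤ K j)
    (N : ℕ) (hN : 1 ≤ N) (T : ℕ) (hT : U + G < T)
    (P : ℝ) (hP : 0 < P)
    (η Emu : ∀ j : Fin G, Fin (K j) → ℝ) (β Eun α : Fin U → ℝ)
    (hη : ∀ j k, 0 < η j k) (hEmu : ∀ j k, 0 < Emu j k)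
    (hβ : ∀ m, 0 < β m) (hEun : ∀ m, 0 < Eun m) (hα : ∀ m, 0 < α m) :
    StrictMonoOn (VmuX N T P η Emu β Eun α) (Set.Icc (0 : ℝ) P) ∧
    ContinuousOn (VmuX N T P η Emu β Eun α) (Set.Icc (0 : ℝ) P) ∧
    StrictMonoOn (VunX N T P η Emu β Eun α) (Set.Icc (0 : ℝ) P) ∧
    ContinuousOn (VunX N T P η Emu β Eun α) (Set.Icc (0 : ℝ) P) := by
  have hT0 : 0 < T := by omega
  have hη0 : ∀ j k, 0 ≤ η j k := fun j k => (hη j k).le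
  have hβ0 : ∀ m, 0 ≤ β m := fun m => (hβ m).le
  have hα0 : ∀ m, 0 ≤ α m := fun m => (hα m).le
  have : Nonempty ((j : Fin G) × Fin (K j)) := ⟨⟨⟨0, hG⟩, ⟨0, hK _⟩⟩⟩
  obtain ⟨⟨j₁, k₁⟩, hηmax⟩ := Finite.exists_max fun p : (j : Fin G) × Fin (K j) => η p.1 p.2
  have : Nonempty (Fin U) := Fin.pos_iff_nonempty.1 hU
  obtain ⟨m₁, hβmax⟩ := Finite.exists_max β
  obtain ⟨hmu, hmu'⟩ := strictMonoOn_and_continuousOn_sSup (S := muValues N T P η Emu Eun)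
    (by have := hη0 j₁ k₁; positivity : 0 ≤ 2 * (1 + η j₁ k₁ * P))
    (fun s hs => zero_mem_muValues hU hT.le (fun j k => (hEmu j k).le) (fun m => (hEun m).le)
      hs.1 hs.2)
    (fun s _ v hv => le_of_mem_muValues hη0 hv j₁ k₁)
    (fun s hs => exists_pos_mem_muValues hU hG hK hN hT hη hEmu (fun m => (hEun m).le) hs.1 hs.2)
    (fun a b ha hab hbP r hr => muValues_gain hT0 hη0 ha hab hbP hr)
    (fun a b ha hab hbP => muValues_loss hU hη0 (hη0 j₁ k₁) (fun j k => hηmax ⟨j, k⟩) ha hab hbP)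
  obtain ⟨hun, hun'⟩ := strictMonoOn_and_continuousOn_sSup (S := unValues N T P Emu β Eun α)
    (by have := hβ0 m₁; have := sum_nonneg fun m (_ : m ∈ univ) => hα0 m; positivity :
      0 ≤ (∑ m, α m) * (2 * (1 + β m₁ * P)))
    (fun s hs => zero_mem_unValues hG hT.le (fun j k => (hEmu j k).le) (fun m => (hEun m).le)
      hs.1 hs.2)
    (fun s _ v hv => le_of_mem_unValues hβ0 hα0 hv)
    (fun s hs => exists_pos_mem_unValues hU hG hN hT hβ hα (fun j k => (hEmu j k).le) hEun
      hs.1 hs.2)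
    (fun a b ha hab hbP r hr => unValues_gain hU hT0 hβ0 hα ha hab hbP hr)
    (fun a b ha hab hbP => unValues_loss hG hβ0 hα0 (hβ0 m₁) hβmax ha hab hbP)
  exact ⟨hmu, hmu', hun, hun'⟩
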